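/- (Proposition 2, hodograph relations) Let β, γ ∈ ℝ, let f : ℝ² → ℝ be a smooth positive function and g : ℝ² → ℂ a smooth function of (y,s) satisfying the bilinear equation (D_s² − β²/8) f·f = −(β²/8) g ḡ, i.e. 2(f_{ss} f − f_s²) − (β²/8) f² = −(β²/8)|g|². Define x(y,s) := −(γ/2) y + (β²/8) s − 2 ∂_s(log f) and q := (β/2)(g/f) e^{i(y − s)}. Then ∂x/∂s = (1/2)|q|² and ∂x/∂y = −γ/2 − 2 ∂_y ∂_s (log f) hold identically. -/

import Mathlib

noncomputable section

/-- Partial derivative with respect to the first variable (`y`). -/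
def pd1 {E : Type*} [NormedAddCommGroup E] [NormedSpace ℝ E] (F : ℝ → ℝ → E) (y s : ℝ) : E :=
  deriv (fun u => F u s) y

/-- Partial derivative with respect to the second variable (`s`). -/
def pd2 {E : Type*} [NormedAddCommGroup E] [NormedSpace ℝ E] (F : ℝ → ℝ → E) (y s : ℝ) : E :=
  deriv (fun v => F y v) s

/-- The hodograph variable `x(y,s) := −(γ/2) y + (β²/8) s − 2 ∂_s(log f)`. -/
def xdef (β γ : ℝ) (f : ℝ → ℝ → ℝ) (y s : ℝ) : ℝ :=
  -(γ / 2) * y + (β ^ 2 / 8) * s - 2 * pd2 (fun u v => Real.log (f u v)) y s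

/-- `q := (β/2)(g/f) e^{i(y − s)}`. -/
def qdef (β : ℝ) (f : ℝ → ℝ → ℝ) (g : ℝ → ℝ → ℂ) (y s : ℝ) : ℂ :=
  ((β / 2 : ℝ) : ℂ) * (g y s / ((f y s : ℝ) : ℂ)) *
    Complex.exp (Complex.I * ((y : ℂ) - (s : ℂ)))
section Aux

lemma diff_slice2 {F : ℝ → ℝ → ℝ} (hF : ContDiff ℝ (⊤ : ℕ∞) (Function.uncurry F)) (y s : ℝ) :
    DifferentiableAt ℝ (fun v => F y v) s := by
  have h : (fun v => F y v) = Function.uncurry F ∘ (fun v => (y, v)) := rfl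
  rw [h]
  exact (hF.differentiable (by simp) (y, s)).comp s
    ((differentiableAt_const y).prodMk differentiableAt_id)

lemma diff_slice1 {F : ℝ → ℝ → ℝ} (hF : ContDiff ℝ (⊤ : ℕ∞) (Function.uncurry F)) (y s : ℝ) :
    DifferentiableAt ℝ (fun u => F u s) y := by
  have h : (fun u => F u s) = Function.uncurry F ∘ (fun u => (u, s)) := rfl
  rw [h]
  exact (hF.differentiable (by simp) (y, s)).comp y
    (differentiableAt_id.prodMk (differentiableAt_const s))

lemma pd2_eq_fderiv {F : ℝ → ℝ → ℝ} (hF : ContDiff ℝ (⊤ : ℕ∞) (Function.uncurry F)) (y s : ℝ) :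
    pd2 F y s = fderiv ℝ (Function.uncurry F) (y, s) (0, 1) := by
  have h1 : HasDerivAt (fun v => ((y, v) : ℝ × ℝ)) ((0 : ℝ), (1 : ℝ)) s :=
    (hasDerivAt_const s y).prodMk (hasDerivAt_id s)
  have h2 := ((hF.differentiable (by simp) (y, s)).hasFDerivAt).comp_hasDerivAt s h1
  exact h2.deriv

lemma contDiff_pd2 {F : ℝ → ℝ → ℝ} (hF : ContDiff ℝ (⊤ : ℕ∞) (Function.uncurry F)) :
    ContDiff ℝ (⊤ : ℕ∞) (Function.uncurry (pd2 F)) := by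
  have h : Function.uncurry (pd2 F) = fun p : ℝ × ℝ =>
      fderiv ℝ (Function.uncurry F) p (0, 1) := by
    funext p
    exact pd2_eq_fderiv hF p.1 p.2
  rw [h]
  exact (hF.fderiv_right (by simp)).clm_apply contDiff_const

end Aux

/-- Proposition 2, hodograph relations: if `f > 0` and `g` satisfy the
bilinear equation `(D_s² − β²/8) f·f = −(β²/8) g ḡ`, i.e.
`2(f_{ss}f − f_s²) − (β²/8)f² = −(β²/8)|g|²`, then `∂x/∂s = (1/2)|q|²` and
`∂x/∂y = −γ/2 − 2 ∂_y ∂_s (log f)`. -/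
theorem hodograph_relations (β γ : ℝ) (f : ℝ → ℝ → ℝ) (g : ℝ → ℝ → ℂ)
    (hf : ContDiff ℝ (⊤ : ℕ∞) (Function.uncurry f)) (hg : ContDiff ℝ (⊤ : ℕ∞) (Function.uncurry g))
    (hfpos : ∀ y s : ℝ, 0 < f y s)
    (hbil2 : ∀ y s : ℝ,
      2 * (pd2 (pd2 f) y s * f y s - (pd2 f y s) ^ 2) - (β ^ 2 / 8) * (f y s) ^ 2
        = -(β ^ 2 / 8) * ‖g y s‖ ^ 2) :
    ∀ y s : ℝ,
      pd2 (xdef β γ f) y s = (1 / 2) * ‖qdef β f g y s‖ ^ 2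
        ∧ pd1 (xdef β γ f) y s
            = -γ / 2 - 2 * pd1 (pd2 fun u v => Real.log (f u v)) y s := by
  set L : ℝ → ℝ → ℝ := fun u v => Real.log (f u v) with hLdef
  have hL : ContDiff ℝ (⊤ : ℕ∞) (Function.uncurry L) := by
    have : Function.uncurry L = fun p : ℝ × ℝ => Real.log (Function.uncurry f p) := rfl
    rw [this]
    exact hf.log (fun p => (hfpos p.1 p.2).ne')
  have hpdL : ContDiff ℝ (⊤ : ℕ∞) (Function.uncurry (pd2 L)) := contDiff_pd2 hL
  -- pd2 L = pd2 f / f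
  have hpd2L : ∀ y s : ℝ, pd2 L y s = pd2 f y s / f y s := by
    intro y s
    have h : HasDerivAt (fun v => Real.log (f y v)) (pd2 f y s / f y s) s :=
      ((diff_slice2 hf y s).hasDerivAt).log (hfpos y s).ne'
    exact h.deriv
  intro y s
  constructor
  · -- ∂x/∂s
    have hf2 : HasDerivAt (fun v => f y v) (pd2 f y s) s := (diff_slice2 hf y s).hasDerivAt
    have hff2 : HasDerivAt (fun v => pd2 f y v) (pd2 (pd2 f) y s) s :=
      (diff_slice2 (contDiff_pd2 hf) y s).hasDerivAt
    have hdiv : HasDerivAt (fun v => pd2 f y v / f y v)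
        ((pd2 (pd2 f) y s * f y s - pd2 f y s * pd2 f y s) / (f y s) ^ 2) s :=
      hff2.div hf2 (hfpos y s).ne'
    have hpdL2 : HasDerivAt (fun v => pd2 L y v)
        ((pd2 (pd2 f) y s * f y s - pd2 f y s * pd2 f y s) / (f y s) ^ 2) s := by
      have he : (fun v => pd2 L y v) = fun v => pd2 f y v / f y v := by
        funext v; exact hpd2L y v
      rw [he]; exact hdiv
    have hx : HasDerivAt (fun v => xdef β γ f y v)
        (β ^ 2 / 8 - 2 * ((pd2 (pd2 f) y s * f y s - pd2 f y s * pd2 f y s) / (f y s) ^ 2)) s := by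
      have h1 : HasDerivAt (fun v : ℝ => -(γ / 2) * y + (β ^ 2 / 8) * v) (β ^ 2 / 8) s := by
        simpa using ((hasDerivAt_id s).const_mul (β ^ 2 / 8)).const_add (-(γ / 2) * y)
      simpa [xdef, Pi.sub_def] using h1.sub (hpdL2.const_mul 2)
    rw [show pd2 (xdef β γ f) y s = deriv (fun v => xdef β γ f y v) s from rfl, hx.deriv]
    -- norm of q
    have hnorm : ‖qdef β f g y s‖ ^ 2 = (β / 2) ^ 2 * ‖g y s‖ ^ 2 / (f y s) ^ 2 := by
      have hre : (Complex.I * ((y : ℂ) - (s : ℂ))).re = 0 := by simp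
      rw [qdef]
      rw [norm_mul, norm_mul, Complex.norm_exp, hre,
        Real.exp_zero, norm_div]
      simp only [Complex.norm_real, Real.norm_eq_abs]
      rw [abs_of_pos (hfpos y s)]
      ring_nf
      rw [sq_abs]
      ring
    rw [hnorm]
    have hb := hbil2 y s
    have hfne : (f y s) ^ 2 ≠ 0 := pow_ne_zero 2 (hfpos y s).ne'
    field_simp
    linear_combination (norm := (have := (hfpos y s).ne'; field_simp; ring)) (-64 / f y s ^ 2) * hb
  · -- ∂x/∂y
    have hpdL1 : HasDerivAt (fun u => pd2 L u s) (pd1 (pd2 L) y s) y :=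
      (diff_slice1 hpdL y s).hasDerivAt
    have hx : HasDerivAt (fun u => xdef β γ f u s)
        (-(γ / 2) - 2 * pd1 (pd2 L) y s) y := by
      have h1 : HasDerivAt (fun u : ℝ => -(γ / 2) * u + (β ^ 2 / 8) * s) (-(γ / 2)) y := by
        simpa using ((hasDerivAt_id y).const_mul (-(γ / 2))).add_const ((β ^ 2 / 8) * s)
      simpa [xdef, Pi.sub_def] using h1.sub (hpdL1.const_mul 2)
    rw [show pd1 (xdef β γ f) y s = deriv (fun u => xdef β γ f u s) y from rfl, hx.deriv]
    ring
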